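/- Let G be a finite Abelian p-group with basis {Q_1,...,Q_N}. Let K = sum q_i Q_i and K' = sum q_i' Q_i be elements of G with K = p^e K', and suppose that for each i, q_i = 0 implies q_i' = 0. Then nu_p(K) = e + nu_p(K'). -/

import Mathlib

/-- A basis of a finite abelian group: every element has a unique representation
`∑ i, b i • Q i` with `0 ≤ b i < |Q i|`. -/
def IsBasis {G : Type*} [AddCommGroup G] {ι : Type*} [Fintype ι] (Q : ι → G) : Prop :=
  ∀ g : G, ∃! b : ι → ℕ,
    (∀ i, b i < addOrderOf (Q i)) ∧ g = ∑ i, b i • Q i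

/-- `K` is primitive w.r.t. the basis `Q` if, writing `K = ∑ i, q i • Q i` with coefficients
in canonical range, `p` does not divide some coefficient `q i`. -/
def IsPrimitive (p : ℕ) {G : Type*} [AddCommGroup G] {ι : Type*} [Fintype ι]
    (Q : ι → G) (K : G) : Prop :=
  ∃ q : ι → ℕ, (∀ i, q i < addOrderOf (Q i)) ∧ K = ∑ i, q i • Q i ∧ ∃ i, ¬ p ∣ q i

/-- The valuation `ν_p` of `K` relative to the basis `Q`: the largest `r` such that `p ^ r`
divides all the (canonical) coefficients of `K`, with `ν_p 0 = ∞`. -/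
noncomputable def nuP (p : ℕ) {G : Type*} [AddCommGroup G] {ι : Type*} [Fintype ι]
    (Q : ι → G) (K : G) : ℕ∞ :=
  sSup (((↑) : ℕ → ℕ∞) '' {r : ℕ | ∀ q : ι → ℕ,
    ((∀ i, q i < addOrderOf (Q i)) ∧ K = ∑ i, q i • Q i) → ∀ i, p ^ r ∣ q i})

/-!
The canonical coefficients of `K = p ^ e • K'` are `q i = p ^ e * q' i mod p ^ a i`, where
`p ^ a i` is the order of `Q i`. Reduction modulo `p ^ a i` does not change divisibility by
`p ^ r` for `r ≤ a i`, and for `r > a i` the coefficient `q i < p ^ r` is divisible only when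
it vanishes, in which case `q' i = 0` by hypothesis. Hence `p ^ r ∣ q i ↔ p ^ (r - e) ∣ q' i`
for every `r`, which shifts the valuation by exactly `e`.
-/

lemma ENat.sSup_image_setOf_tsub_mem {S : Set ℕ} (h0 : 0 ∈ S) (e : ℕ) :
    sSup (((↑) : ℕ → ℕ∞) '' {r | r - e ∈ S}) = e + sSup (((↑) : ℕ → ℕ∞) '' S) := by
  apply le_antisymm
  · refine sSup_le ?_
    rintro _ ⟨r, hr, rfl⟩
    calc (r : ℕ∞) ≤ ((e + (r - e) : ℕ) : ℕ∞) := by exact_mod_cast (by omega)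
      _ ≤ e + sSup (((↑) : ℕ → ℕ∞) '' S) := by
        push_cast
        gcongr
        exact le_sSup (Set.mem_image_of_mem _ hr)
  · rw [ENat.add_sSup (Set.Nonempty.image _ ⟨0, h0⟩)]
    refine iSup₂_le ?_
    rintro _ ⟨s, hs, rfl⟩
    exact le_sSup ⟨e + s, by simpa using hs, by push_cast; rfl⟩

lemma Nat.pow_dvd_pow_mul_iff {p : ℕ} (hp : 0 < p) (r e m : ℕ) :
    p ^ r ∣ p ^ e * m ↔ p ^ (r - e) ∣ m := by
  rcases le_or_gt r e with hre | hre
  · simpa [Nat.sub_eq_zero_of_le hre] using dvd_mul_of_dvd_left (pow_dvd_pow p hre) m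
  · rw [← Nat.add_sub_of_le hre.le, pow_add, Nat.mul_dvd_mul_iff_left (pow_pos hp e),
      Nat.add_sub_cancel_left]

lemma Nat.pow_dvd_pow_mul_mod_iff {p : ℕ} (hp : 1 < p) {a e m : ℕ}
    (hzero : p ^ e * m % p ^ a = 0 → m = 0) (r : ℕ) :
    p ^ r ∣ p ^ e * m % p ^ a ↔ p ^ (r - e) ∣ m := by
  rcases le_or_gt r a with hra | har
  · rw [Nat.dvd_mod_iff (pow_dvd_pow p hra), Nat.pow_dvd_pow_mul_iff (by omega)]
  · have hlt : p ^ e * m % p ^ a < p ^ r :=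
      (Nat.mod_lt _ (pow_pos (by omega) a)).trans (Nat.pow_lt_pow_right hp har)
    constructor
    · intro h
      simp [hzero (Nat.eq_zero_of_dvd_of_lt h hlt)]
    · intro h
      have hdvd : p ^ a ∣ p ^ e * m :=
        (pow_dvd_pow p har.le).trans ((Nat.pow_dvd_pow_mul_iff (by omega) r e m).2 h)
      rw [Nat.mod_eq_zero_of_dvd hdvd]
      exact dvd_zero _

namespace IsBasis

variable {G : Type*} [AddCommGroup G] {ι : Type*} [Fintype ι] {Q : ι → G}

lemma addOrderOf_pos (hQ : IsBasis Q) (i : ι) : 0 < addOrderOf (Q i) := by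
  obtain ⟨b, ⟨hb, -⟩, -⟩ := hQ 0
  exact (Nat.zero_le _).trans_lt (hb i)

lemma repr_unique (hQ : IsBasis Q) {g : G} {b c : ι → ℕ}
    (hb : ∀ i, b i < addOrderOf (Q i)) (hg : g = ∑ i, b i • Q i)
    (hc : ∀ i, c i < addOrderOf (Q i)) (hg' : g = ∑ i, c i • Q i) : b = c :=
  (hQ g).unique ⟨hb, hg⟩ ⟨hc, hg'⟩

lemma repr_nsmul (hQ : IsBasis Q) {K K' : G} {q q' : ι → ℕ}
    (hq : ∀ i, q i < addOrderOf (Q i)) (hK : K = ∑ i, q i • Q i) (hK' : K' = ∑ i, q' i • Q i)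
    {n : ℕ} (hKK' : K = n • K') (i : ι) : q i = n * q' i % addOrderOf (Q i) := by
  refine congrFun (hQ.repr_unique (c := fun j ↦ n * q' j % addOrderOf (Q j)) hq hK
    (fun j ↦ Nat.mod_lt _ (hQ.addOrderOf_pos j)) ?_) i
  rw [hKK', hK', Finset.smul_sum]
  exact Finset.sum_congr rfl fun j _ ↦ by rw [mod_addOrderOf_nsmul, smul_smul]

lemma nuP_eq (hQ : IsBasis Q) (p : ℕ) {K : G} {q : ι → ℕ}
    (hq : ∀ i, q i < addOrderOf (Q i)) (hK : K = ∑ i, q i • Q i) :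
    nuP p Q K = sSup (((↑) : ℕ → ℕ∞) '' {r | ∀ i, p ^ r ∣ q i}) := by
  unfold nuP
  congr 2
  ext r
  exact ⟨fun h ↦ h q ⟨hq, hK⟩, fun h b hb ↦ hQ.repr_unique hb.1 hb.2 hq hK ▸ h⟩

end IsBasis

theorem nuP_smul_eq_general {G : Type*} [AddCommGroup G]
    {p : ℕ} (hp : p.Prime) (hG : ∀ g : G, ∃ k : ℕ, p ^ k • g = 0)
    {N : ℕ} (Q : Fin N → G) (hQ : IsBasis Q)
    (K K' : G) (q q' : Fin N → ℕ)
    (hqlt : ∀ i, q i < addOrderOf (Q i)) (hK : K = ∑ i, q i • Q i)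
    (hq'lt : ∀ i, q' i < addOrderOf (Q i)) (hK' : K' = ∑ i, q' i • Q i)
    (e : ℕ) (hKK' : K = p ^ e • K')
    (hzero : ∀ i, q i = 0 → q' i = 0) :
    nuP p Q K = e + nuP p Q K' := by
  have hord : ∀ i, ∃ a, addOrderOf (Q i) = p ^ a := fun i ↦ by
    obtain ⟨k, hk⟩ := hG (Q i)
    obtain ⟨a, -, ha⟩ := (Nat.dvd_prime_pow hp).1 (addOrderOf_dvd_of_nsmul_eq_zero hk)
    exact ⟨a, ha⟩
  choose a ha using hord
  have hcoeff i : q i = p ^ e * q' i % p ^ a i := ha i ▸ hQ.repr_nsmul hqlt hK hK' hKK' i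
  have hdvd : {r | ∀ i, p ^ r ∣ q i} = {r | r - e ∈ {s | ∀ i, p ^ s ∣ q' i}} := by
    ext r
    refine forall_congr' fun i ↦ ?_
    rw [hcoeff i]
    exact Nat.pow_dvd_pow_mul_mod_iff hp.one_lt (hcoeff i ▸ hzero i) r
  rw [hQ.nuP_eq p hqlt hK, hQ.nuP_eq p hq'lt hK', hdvd]
  exact ENat.sSup_image_setOf_tsub_mem (fun i ↦ by simp) e

/-- If `K = p ^ e • K'` and every vanishing canonical coefficient of `K` forces the
corresponding coefficient of `K'` to vanish, then `ν_p K = e + ν_p K'`. -/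
theorem nuP_smul_eq {G : Type*} [AddCommGroup G] [Fintype G]
    {p : ℕ} (hp : p.Prime) (hG : ∀ g : G, ∃ k : ℕ, p ^ k • g = 0)
    {N : ℕ} (Q : Fin N → G) (hQ : IsBasis Q)
    (K K' : G) (q q' : Fin N → ℕ)
    (hqlt : ∀ i, q i < addOrderOf (Q i)) (hK : K = ∑ i, q i • Q i)
    (hq'lt : ∀ i, q' i < addOrderOf (Q i)) (hK' : K' = ∑ i, q' i • Q i)
    (e : ℕ) (hKK' : K = p ^ e • K')
    (hzero : ∀ i, q i = 0 → q' i = 0) :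
    nuP p Q K = e + nuP p Q K' :=
  nuP_smul_eq_general hp hG Q hQ K K' q q' hqlt hK hq'lt hK' e hKK' hzero
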